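/- arXiv:1901.11010 — 8 statements merged into one kernel-verified Lean document; each statement's English description precedes it below -/
import Mathlib

section
/- The flat term B applied to itself 8 times, B⁸ₗ = ((((((B B) B) B) B) B) B) B, is βη-equal to the 3-argument composition λf.λg.λx.λy.λz. f (g x y z). -/
/-- Untyped lambda terms in de Bruijn representation. -/
inductive Lam : Type
  | var : Nat → Lam
  | app : Lam → Lam → Lam
  | lam : Lam → Lam
  deriving DecidableEq

namespace Lam

/-- Shift free variables `≥ d` up by one. -/
def lift (d : Nat) : Lam → Lam
  | var n => var (if n < d then n else n + 1)
  | app a b => app (lift d a) (lift d b)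
  | lam a => lam (lift (d + 1) a)

/-- Substitute `s` for variable `d` (and lower the variables above `d`). -/
def subst (d : Nat) (s : Lam) : Lam → Lam
  | var n => if n = d then s else if d < n then var (n - 1) else var n
  | app a b => app (subst d s a) (subst d s b)
  | lam a => lam (subst (d + 1) (lift 0 s) a)

/-- βη-equivalence of lambda terms. -/
inductive BetaEta : Lam → Lam → Prop
  | beta (t s : Lam) : BetaEta (app (lam t) s) (subst 0 s t)
  | eta (t : Lam) : BetaEta (lam (app (lift 0 t) (var 0))) t
  | refl (t : Lam) : BetaEta t t
  | symm {t s : Lam} : BetaEta t s → BetaEta s t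
  | trans {t s u : Lam} : BetaEta t s → BetaEta s u → BetaEta t u
  | congApp {t t' s s' : Lam} : BetaEta t t' → BetaEta s s' →
      BetaEta (app t s) (app t' s')
  | congLam {t t' : Lam} : BetaEta t t' → BetaEta (lam t) (lam t')

/-- The B combinator `λf.λg.λx. f (g x)`. -/
def B : Lam := lam (lam (lam (app (var 2) (app (var 1) (var 0)))))

/-- Left-nested self-application `X X ... X` with `k` copies (for `k ≥ 1`). -/
def sapp (X : Lam) : Nat → Lam
  | 0 => X
  | 1 => X
  | k + 2 => app (sapp X (k + 1)) X

end Lam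

/-!
The equation holds by β-reduction alone: normal-order reduction takes `B⁸ₗ` to
`λf g x y z. f (g x y z)` in 19 steps. Normal-order reduction is implemented as a function,
shown sound for `BetaEta`, and those 19 steps are evaluated by the kernel.
-/

namespace Lam

def normalStep : Lam → Option Lam
  | var _ => none
  | lam t => (normalStep t).map lam
  | app (lam t) s => some (subst 0 s t)
  | app a b =>
    match normalStep a with
    | some a' => some (app a' b)
    | none => (normalStep b).map (app a)

def normalize : Nat → Lam → Lam
  | 0, t => t
  | n + 1, t => (normalStep t).elim t (normalize n)

theorem betaEta_of_normalStep {t t' : Lam} (h : normalStep t = some t') : BetaEta t t' := by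
  fun_induction normalStep t generalizing t' with
  | case1 => cases h
  | case2 t ih =>
    obtain ⟨u, hu, rfl⟩ := Option.map_eq_some_iff.mp h
    exact .congLam (ih hu)
  | case3 t s =>
    cases h
    exact .beta t s
  | case4 a b _ a' ha ih =>
    cases h
    exact .congApp (ih ha) (.refl b)
  | case5 a b _ _ _ ihb =>
    obtain ⟨u, hu, rfl⟩ := Option.map_eq_some_iff.mp h
    exact .congApp (.refl a) (ihb hu)

theorem betaEta_normalize (n : Nat) (t : Lam) : BetaEta t (normalize n t) := by
  induction n generalizing t with
  | zero => exact .refl t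
  | succ n ih =>
    rcases h : normalStep t with _ | t'
    · simp only [normalize, h, Option.elim_none]
      exact .refl t
    · simp only [normalize, h, Option.elim_some]
      exact (betaEta_of_normalStep h).trans (ih t')

theorem betaEta_of_normalize_eq {n : Nat} {t u : Lam} (h : normalize n t = u) : BetaEta t u :=
  h ▸ betaEta_normalize n t

theorem sapp_B_eight :
    BetaEta (sapp B 8)
      (lam (lam (lam (lam (lam
        (app (var 4) (app (app (app (var 3) (var 2)) (var 1)) (var 0)))))))) :=
  betaEta_of_normalize_eq (n := 19) (by decide)

end Lam
end

section
/- The flat terms B⁶ₗ and B¹⁰ₗ (left-nested applications of B to itself 6 and 10 times) are both βη-equal to λx.λy.λz.λw.λv. x (y z) (w v); consequently Bⁱₗ = B^{i+4}ₗ (βη) for every i ≥ 6, i.e., B has the ρ-property with ρ(B) = (6,4). -/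
namespace Lam

/-- λx.λy.λz.λw.λv. x (y z) (w v) -/
def E : Lam :=
  lam (lam (lam (lam (lam (app (app (var 4) (app (var 3) (var 2))) (app (var 1) (var 0)))))))

/-!
`B⁶` and `B¹⁰` both reduce to `E`, which is checked by computation, and the period-4 tail
follows by congruence. Minimality needs that βη-equality is decided by normal forms, i.e. the
Church–Rosser theorem for βη. It follows à la Takahashi: parallel βη-reduction `Par` has the
triangle property with respect to the complete development `develop`, hence the diamond
property. The normal forms of `B¹, …, B⁹` are pairwise distinct, and every `Bᵏ` is βη-equal to
one of `B¹, …, B⁹`.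
-/

def size : Lam → ℕ
  | var _ => 1
  | app a b => size a + size b + 1
  | lam a => size a + 1

def hasVar (d : ℕ) : Lam → Bool
  | var n => n == d
  | app a b => hasVar d a || hasVar d b
  | lam a => hasVar (d + 1) a

def lower (d : ℕ) : Lam → Lam
  | var n => var (if d < n then n - 1 else n)
  | app a b => app (lower d a) (lower d b)
  | lam a => lam (lower (d + 1) a)

@[simp]
theorem size_lift (d : ℕ) (t : Lam) : size (lift d t) = size t := by
  induction t generalizing d <;> simp [lift, size, *]

theorem lift_lift {d e : ℕ} (h : d ≤ e) (t : Lam) :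
    lift d (lift e t) = lift (e + 1) (lift d t) := by
  induction t generalizing d e with
  | var n => grind [lift]
  | app a b iha ihb => simp [lift, iha h, ihb h]
  | lam a ih => simp [lift, ih (Nat.succ_le_succ h)]

theorem lift_subst {e d : ℕ} (h : e ≤ d) (x t : Lam) :
    lift d (subst e x t) = subst e (lift d x) (lift (d + 1) t) := by
  induction t generalizing e d x with
  | var n => grind [lift, subst]
  | app a b iha ihb => simp [lift, subst, iha h, ihb h]
  | lam a ih => simp [lift, subst, ih (Nat.succ_le_succ h), lift_lift (Nat.zero_le d)]

theorem subst_lift_lift {c d : ℕ} (h : c ≤ d) (x t : Lam) :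
    subst (d + 1) (lift c x) (lift c t) = lift c (subst d x t) := by
  induction t generalizing c d x with
  | var n => grind [lift, subst]
  | app a b iha ihb => simp [lift, subst, iha h, ihb h]
  | lam a ih => simp [lift, subst, lift_lift (Nat.zero_le c), ih (Nat.succ_le_succ h)]

@[simp]
theorem subst_lift (d : ℕ) (x t : Lam) : subst d x (lift d t) = t := by
  induction t generalizing d x with
  | var n => grind [lift, subst]
  | app a b iha ihb => simp [lift, subst, iha, ihb]
  | lam a ih => simp [lift, subst, ih]

theorem subst_subst {c d : ℕ} (h : c ≤ d) (x y t : Lam) :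
    subst d x (subst c y t) = subst c (subst d x y) (subst (d + 1) (lift c x) t) := by
  induction t generalizing c d x y with
  | var n => grind [lift, subst, subst_lift]
  | app a b iha ihb => simp [subst, iha h, ihb h]
  | lam a ih =>
    simp [subst, ih (Nat.succ_le_succ h), subst_lift_lift (Nat.zero_le d),
      lift_lift (Nat.zero_le c)]

@[simp]
theorem subst_var_lift (d : ℕ) (t : Lam) : subst d (var d) (lift (d + 1) t) = t := by
  induction t generalizing d with
  | var n => grind [lift, subst]
  | app a b iha ihb => simp [lift, subst, iha, ihb]
  | lam a ih => simp [lift, subst, ih]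

@[simp]
theorem hasVar_lift_self (d : ℕ) (t : Lam) : hasVar d (lift d t) = false := by
  induction t generalizing d with
  | var n => grind [lift, hasVar]
  | app a b iha ihb => simp [lift, hasVar, iha, ihb]
  | lam a ih => simp [lift, hasVar, ih]

theorem hasVar_lift_of_lt {c d : ℕ} (h : c < d) (t : Lam) :
    hasVar c (lift d t) = hasVar c t := by
  induction t generalizing c d with
  | var n => grind [lift, hasVar]
  | app a b iha ihb => simp [lift, hasVar, iha h, ihb h]
  | lam a ih => simp [lift, hasVar, ih (Nat.succ_lt_succ h)]

theorem lift_lower {d : ℕ} {t : Lam} (h : hasVar d t = false) : lift d (lower d t) = t := by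
  induction t generalizing d with
  | var n => grind [lift, lower, hasVar]
  | app a b iha ihb =>
    simp only [hasVar, Bool.or_eq_false_iff] at h
    simp [lower, lift, iha h.1, ihb h.2]
  | lam a ih => simp [lower, lift, ih h]

@[simp]
theorem lower_lift (d : ℕ) (t : Lam) : lower d (lift d t) = t := by
  induction t generalizing d with
  | var n => grind [lift, lower]
  | app a b iha ihb => simp [lift, lower, iha, ihb]
  | lam a ih => simp [lift, lower, ih]

theorem lift_injective (d : ℕ) : Function.Injective (lift d) :=
  Function.LeftInverse.injective (lower_lift d)

theorem exists_eq_lift_zero_of_lift_succ_eq {d : ℕ} {t q : Lam} (h : lift (d + 1) t = lift 0 q) :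
    ∃ t', t = lift 0 t' ∧ q = lift d t' := by
  have ht : hasVar 0 t = false := by
    rw [← hasVar_lift_of_lt d.succ_pos, h, hasVar_lift_self]
  refine ⟨lower 0 t, (lift_lower ht).symm, lift_injective 0 ?_⟩
  rw [← h, lift_lift (Nat.zero_le d), lift_lower ht]

inductive Par : Lam → Lam → Prop
  | var (n : ℕ) : Par (var n) (var n)
  | app {t t' s s' : Lam} : Par t t' → Par s s' → Par (app t s) (app t' s')
  | lam {t t' : Lam} : Par t t' → Par (lam t) (lam t')
  | beta {t t' s s' : Lam} : Par t t' → Par s s' → Par (app (lam t) s) (subst 0 s' t')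
  | eta {t t' : Lam} : Par t t' → Par (lam (app (lift 0 t) (var 0))) t'

namespace Par

protected theorem refl : ∀ t : Lam, Par t t
  | .var n => .var n
  | .app a b => .app (Par.refl a) (Par.refl b)
  | .lam a => .lam (Par.refl a)

theorem betaEta {t s : Lam} (h : Par t s) : BetaEta t s := by
  induction h with
  | var n => exact .refl _
  | app _ _ iht ihs => exact .congApp iht ihs
  | lam _ ih => exact .congLam ih
  | beta _ _ iht ihs => exact (BetaEta.congApp (.congLam iht) ihs).trans (.beta _ _)
  | eta _ ih => exact (BetaEta.eta _).trans ih

protected theorem lift {t s : Lam} (h : Par t s) (d : ℕ) : Par (lift d t) (lift d s) := by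
  induction h generalizing d with
  | var n => exact Par.refl _
  | app _ _ iht ihs => exact .app (iht d) (ihs d)
  | lam _ ih => exact .lam (ih (d + 1))
  | beta _ _ iht ihs =>
    rw [lift_subst (Nat.zero_le d)]
    exact .beta (iht (d + 1)) (ihs d)
  | eta _ ih =>
    have := Par.eta (ih d)
    rwa [lift_lift (Nat.zero_le d)] at this

protected theorem subst {t t' : Lam} (ht : Par t t') {s s' : Lam} (hs : Par s s') (d : ℕ) :
    Par (subst d s t) (subst d s' t') := by
  induction ht generalizing s s' d with
  | var n => simp only [Lam.subst]; split_ifs <;> first | exact hs | exact Par.refl _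
  | app _ _ ih₁ ih₂ => exact .app (ih₁ hs d) (ih₂ hs d)
  | lam _ ih => exact .lam (ih (hs.lift 0) (d + 1))
  | beta _ _ ih₁ ih₂ =>
    rw [subst_subst (Nat.zero_le d)]
    exact .beta (ih₁ (hs.lift 0) (d + 1)) (ih₂ hs d)
  | eta _ ih =>
    have := Par.eta (ih hs d)
    rwa [← subst_lift_lift (Nat.zero_le d)] at this

theorem exists_of_lift {d : ℕ} {t s : Lam} (h : Par (lift d t) s) :
    ∃ t', s = lift d t' ∧ Par t t' := by
  generalize hx : lift d t = x at h
  induction h generalizing d t with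
  | var n =>
    exact ⟨t, hx.symm, Par.refl t⟩
  | app _ _ ih₁ ih₂ =>
    cases t <;> simp only [lift, reduceCtorEq, app.injEq] at hx
    obtain ⟨a', rfl, ha⟩ := ih₁ hx.1
    obtain ⟨b', rfl, hb⟩ := ih₂ hx.2
    exact ⟨Lam.app a' b', rfl, ha.app hb⟩
  | lam _ ih =>
    cases t <;> simp only [lift, reduceCtorEq, lam.injEq] at hx
    obtain ⟨a', rfl, ha⟩ := ih hx
    exact ⟨Lam.lam a', rfl, ha.lam⟩
  | beta _ _ ih₁ ih₂ =>
    rcases t with _ | ⟨_ | _ | a, b⟩ | _ <;>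
      simp only [lift, reduceCtorEq, app.injEq, lam.injEq, false_and] at hx
    obtain ⟨a', rfl, ha⟩ := ih₁ hx.1
    obtain ⟨b', rfl, hb⟩ := ih₂ hx.2
    exact ⟨subst 0 b' a', (lift_subst (Nat.zero_le d) b' a').symm, ha.beta hb⟩
  | eta _ ih =>
    rcases t with _ | _ | ⟨_ | ⟨u, _ | _ | _⟩ | _⟩ <;>
      simp only [lift, reduceCtorEq, app.injEq, lam.injEq, var.injEq, and_false] at hx
    obtain ⟨hu, hv⟩ := hx
    obtain ⟨u', rfl, rfl⟩ := exists_eq_lift_zero_of_lift_succ_eq hu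
    obtain rfl : _ = 0 := by split_ifs at hv; omega
    obtain ⟨t', rfl, ht⟩ := ih rfl
    exact ⟨t', rfl, .eta ht⟩

end Par

-- The η-redex `λ. u 0` (with `0` not free in `u`) is contracted before `u` is developed.
def develop : Lam → Lam
  | var n => var n
  | app (lam t) b => subst 0 (develop b) (develop t)
  | app a b => app (develop a) (develop b)
  | lam (app u (var 0)) =>
      if hasVar 0 u then lam (develop (app u (var 0))) else lower 0 (develop u)
  | lam t => lam (develop t)

theorem develop_app_of_ne_lam {a : Lam} (h : ∀ t, a ≠ lam t) (b : Lam) :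
    develop (app a b) = app (develop a) (develop b) :=
  develop.eq_3 a b h

theorem develop_lam_of_ne_etaBody {t : Lam} (h : ∀ q, t ≠ app (lift 0 q) (var 0)) :
    develop (lam t) = lam (develop t) := by
  by_cases ht : ∃ u, t = app u (var 0)
  · obtain ⟨u, rfl⟩ := ht
    have hu : hasVar 0 u = true := by
      by_contra hu
      exact h (lower 0 u) (by rw [lift_lower (by simpa using hu)])
    simp [develop, hu]
  · exact develop.eq_5 t fun u hu => ht ⟨u, hu⟩

theorem lift_succ_ne_etaBody {p : Lam} (h : ∀ q, p ≠ app (lift 0 q) (var 0)) (d : ℕ)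
    (q : Lam) : lift (d + 1) p ≠ app (lift 0 q) (var 0) := by
  intro hp
  rcases p with _ | ⟨u, _ | _ | _⟩ | _ <;>
    simp only [lift, reduceCtorEq, app.injEq, var.injEq, and_false] at hp
  obtain ⟨hu, hv⟩ := hp
  obtain ⟨u', rfl, -⟩ := exists_eq_lift_zero_of_lift_succ_eq hu
  obtain rfl : _ = 0 := by split_ifs at hv; omega
  exact h u' rfl

theorem develop_etaExpand_eq_lower (q : Lam) :
    develop (lam (app (lift 0 q) (var 0))) = lower 0 (develop (lift 0 q)) := by
  simp [develop]

theorem develop_lift (d : ℕ) (t : Lam) : develop (lift d t) = lift d (develop t) := by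
  match t with
  | var n => rfl
  | app a b =>
    by_cases ha : ∃ p, a = lam p
    · obtain ⟨p, rfl⟩ := ha
      simp only [lift, develop]
      rw [develop_lift (d + 1) p, develop_lift d b, lift_subst (Nat.zero_le d)]
    · have ha' : ∀ p, a ≠ lam p := fun p hp => ha ⟨p, hp⟩
      have hla : ∀ p, lift d a ≠ lam p := by cases a <;> simp_all [lift]
      rw [lift, develop_app_of_ne_lam ha', develop_app_of_ne_lam hla, develop_lift d a,
        develop_lift d b, lift]
  | lam p =>
    by_cases hp : ∃ q, p = app (lift 0 q) (var 0)
    · obtain ⟨q, rfl⟩ := hp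
      have hlift : lift d (lam (app (lift 0 q) (var 0))) =
          lam (app (lift 0 (lift d q)) (var 0)) := by
        simp [lift, lift_lift (Nat.zero_le d)]
      rw [hlift, develop_etaExpand_eq_lower, develop_etaExpand_eq_lower, develop_lift 0,
        develop_lift 0, lower_lift, lower_lift, develop_lift d]
    · have hp' : ∀ q, p ≠ app (lift 0 q) (var 0) := fun q hq => hp ⟨q, hq⟩
      rw [lift, develop_lam_of_ne_etaBody hp', develop_lam_of_ne_etaBody
        (lift_succ_ne_etaBody hp' d), develop_lift (d + 1) p, lift]
termination_by size t
decreasing_by all_goals subst_vars; simp only [size, size_lift]; omega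

@[simp]
theorem develop_etaExpand (q : Lam) : develop (lam (app (lift 0 q) (var 0))) = develop q := by
  rw [develop_etaExpand_eq_lower, develop_lift, lower_lift]

theorem develop_app_etaExpand (q b : Lam) :
    develop (app (lam (app (lift 0 q) (var 0))) b) = develop (app q b) := by
  by_cases hq : ∃ r, q = lam r
  · obtain ⟨r, rfl⟩ := hq
    simp [lift, develop, develop_lift]
  · have hq' : ∀ r, q ≠ lam r := fun r hr => hq ⟨r, hr⟩
    have hlq : ∀ r, lift 0 q ≠ lam r := by cases q <;> simp_all [lift]
    rw [develop, develop_app_of_ne_lam hlq, develop_app_of_ne_lam hq', develop_lift]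
    simp [develop, Lam.subst]

theorem Par.triangle {t s : Lam} (h : Par t s) : Par s (develop t) := by
  match t, h with
  | .var n, .var _ => exact .var n
  | .app (.lam _) _, .beta hp hb => exact hp.triangle.subst hb.triangle 0
  | .app (.lam _) _, .app (.lam hp) hb => exact .beta hp.triangle hb.triangle
  | .app (.lam _) _, .app (.eta hq) hb =>
    rw [develop_app_etaExpand]
    exact (Par.app hq hb).triangle
  | .app (.var _) _, .app ha hb =>
    rw [develop_app_of_ne_lam (by simp)]
    exact .app ha.triangle hb.triangle
  | .app (.app _ _) _, .app ha hb =>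
    rw [develop_app_of_ne_lam (by simp)]
    exact .app ha.triangle hb.triangle
  | .lam _, .eta hq => rw [develop_etaExpand]; exact hq.triangle
  | .lam p, .lam hp =>
    by_cases he : ∃ q, p = .app (lift 0 q) (.var 0)
    · obtain ⟨q, rfl⟩ := he
      rw [develop_etaExpand]
      generalize hL : lift 0 q = L at hp
      cases hp with
      | app hL' hv =>
        cases hv
        obtain ⟨q', rfl, hq⟩ := exists_of_lift (hL ▸ hL')
        exact .eta hq.triangle
      | beta hw hv =>
        cases hv
        obtain ⟨r, rfl⟩ : ∃ r, q = .lam r := by cases q <;> simp [lift] at hL ⊢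
        simp only [lift, Lam.lam.injEq] at hL
        subst hL
        obtain ⟨r', rfl, hr⟩ := exists_of_lift hw
        rw [subst_var_lift]
        exact (Par.lam hr).triangle
    · rw [develop_lam_of_ne_etaBody fun q hq => he ⟨q, hq⟩]
      exact .lam hp.triangle
termination_by size t
decreasing_by all_goals subst_vars; simp only [size, size_lift, lift]; omega

theorem Par.diamond {t a b : Lam} (ha : Par t a) (hb : Par t b) : ∃ u, Par a u ∧ Par b u :=
  ⟨develop t, ha.triangle, hb.triangle⟩

open Relation in
theorem equivalence_join_reflTransGen_par : Equivalence (Join (ReflTransGen Par)) :=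
  equivalence_join_reflTransGen fun _ _ _ ha hb =>
    let ⟨u, hau, hbu⟩ := ha.diamond hb
    ⟨u, .single hau, .single hbu⟩

open Relation in
theorem reflTransGen_par_app {a a' b b' : Lam} (ha : ReflTransGen Par a a')
    (hb : ReflTransGen Par b b') : ReflTransGen Par (app a b) (app a' b') :=
  (ha.lift (app · b) fun _ _ h => h.app (.refl b)).trans
    (hb.lift (app a') fun _ _ h => (Par.refl a').app h)

open Relation in
theorem BetaEta.join_par {t s : Lam} (h : BetaEta t s) : Join (ReflTransGen Par) t s := by
  induction h with
  | beta t s => exact ⟨_, .single (.beta (.refl t) (.refl s)), .refl⟩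
  | eta t => exact ⟨t, .single (.eta (.refl t)), .refl⟩
  | refl t => exact equivalence_join_reflTransGen_par.refl t
  | symm _ ih => exact equivalence_join_reflTransGen_par.symm ih
  | trans _ _ ih₁ ih₂ => exact equivalence_join_reflTransGen_par.trans ih₁ ih₂
  | congApp _ _ ih₁ ih₂ =>
    obtain ⟨u, htu, ht'u⟩ := ih₁
    obtain ⟨v, hsv, hs'v⟩ := ih₂
    exact ⟨app u v, reflTransGen_par_app htu hsv, reflTransGen_par_app ht'u hs'v⟩
  | congLam _ ih =>
    obtain ⟨u, htu, ht'u⟩ := ih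
    exact ⟨lam u, htu.lift lam fun _ _ h => h.lam, ht'u.lift lam fun _ _ h => h.lam⟩

def isNormal : Lam → Bool
  | var _ => true
  | app (lam _) _ => false
  | app a b => isNormal a && isNormal b
  | lam (app u (var 0)) => hasVar 0 u && isNormal (app u (var 0))
  | lam t => isNormal t

theorem isNormal_of_app {a b : Lam} (h : isNormal (app a b) = true) :
    isNormal a = true ∧ isNormal b = true := by
  cases a <;> simp_all [isNormal]

theorem isNormal_of_lam {t : Lam} (h : isNormal (lam t) = true) : isNormal t = true := by
  by_cases ht : ∃ u, t = app u (var 0)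
  · obtain ⟨u, rfl⟩ := ht
    simp_all [isNormal]
  · rwa [isNormal.eq_5 t fun u hu => ht ⟨u, hu⟩] at h

theorem Par.eq_of_isNormal {t s : Lam} (h : Par t s) (ht : isNormal t = true) : s = t := by
  induction h with
  | var n => rfl
  | app _ _ ih₁ ih₂ =>
    obtain ⟨h₁, h₂⟩ := isNormal_of_app ht
    rw [ih₁ h₁, ih₂ h₂]
  | lam _ ih => rw [ih (isNormal_of_lam ht)]
  | beta => simp [isNormal] at ht
  | eta => simp [isNormal] at ht

theorem eq_of_reflTransGen_par_of_isNormal {t s : Lam} (h : Relation.ReflTransGen Par t s)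
    (ht : isNormal t = true) : s = t := by
  induction h with
  | refl => rfl
  | tail _ hsu ih => rw [hsu.eq_of_isNormal (ih ▸ ht), ih]

theorem BetaEta.eq_of_isNormal {t s : Lam} (h : BetaEta t s) (ht : isNormal t = true)
    (hs : isNormal s = true) : t = s := by
  obtain ⟨u, htu, hsu⟩ := h.join_par
  exact (eq_of_reflTransGen_par_of_isNormal htu ht).symm.trans
    (eq_of_reflTransGen_par_of_isNormal hsu hs)

theorem betaEta_iterate_develop (n : ℕ) (t : Lam) : BetaEta t (develop^[n] t) := by
  induction n with
  | zero => exact .refl t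
  | succ n ih =>
    rw [Function.iterate_succ_apply']
    exact ih.trans (Par.refl _).triangle.betaEta

theorem sapp_succ (X : Lam) {i : ℕ} (hi : 1 ≤ i) : sapp X (i + 1) = app (sapp X i) X := by
  obtain ⟨k, rfl⟩ := Nat.exists_eq_add_of_le' hi
  rfl

theorem BetaEta.sapp_add {X : Lam} {i j : ℕ} (hi : 1 ≤ i) (hj : 1 ≤ j)
    (h : BetaEta (sapp X i) (sapp X j)) (k : ℕ) : BetaEta (sapp X (i + k)) (sapp X (j + k)) := by
  induction k with
  | zero => exact h
  | succ k ih =>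
    rw [← add_assoc, ← add_assoc, sapp_succ X (by omega), sapp_succ X (by omega)]
    exact ih.congApp (.refl X)

-- The position of the `k`-th term of a ρ-shaped sequence with tail `0, …, m - 1` and cycle
-- `m, …, m + p - 1`.
def rhoIndex (m p k : ℕ) : ℕ := if k < m then k else m + (k - m) % p

theorem rhoIndex_lt {p : ℕ} (hp : 0 < p) (m k : ℕ) : rhoIndex m p k < m + p := by
  unfold rhoIndex
  split_ifs
  · omega
  · exact Nat.add_lt_add_left (Nat.mod_lt _ hp) m

theorem one_le_rhoIndex {m k : ℕ} (hm : 1 ≤ m) (hk : 1 ≤ k) (p : ℕ) : 1 ≤ rhoIndex m p k := by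
  unfold rhoIndex
  split_ifs <;> omega

theorem le_and_dvd_of_rhoIndex_eq {m p i j : ℕ} (hj : 0 < j)
    (h : rhoIndex m p i = rhoIndex m p (i + j)) : m ≤ i ∧ p ∣ j := by
  unfold rhoIndex at h
  split_ifs at h with hi hij hij
  · omega
  · omega
  · omega
  · refine ⟨by omega, ?_⟩
    have hmod : i - m ≡ i - m + j [MOD p] := by
      rw [show i + j - m = i - m + j by omega] at h
      exact Nat.add_left_cancel h
    simpa using (Nat.modEq_iff_dvd' (by omega)).mp hmod

theorem betaEta_sapp_rhoIndex {X : Lam} {m p : ℕ} (hm : 1 ≤ m)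
    (h : BetaEta (sapp X m) (sapp X (m + p))) {k : ℕ} (hk : 1 ≤ k) :
    BetaEta (sapp X k) (sapp X (rhoIndex m p k)) := by
  rcases Nat.eq_zero_or_pos p with rfl | hp
  · rw [show rhoIndex m 0 k = k by simp only [rhoIndex, Nat.mod_zero]; split_ifs <;> omega]
    exact .refl _
  induction k using Nat.strong_induction_on with
  | _ k ih =>
    by_cases hkp : k < m + p
    · rw [rhoIndex]
      split_ifs
      · exact .refl _
      · rw [Nat.mod_eq_of_lt (by omega), Nat.add_sub_cancel' (by omega)]
        exact .refl _
    · have hshift : BetaEta (sapp X (k - p)) (sapp X k) := by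
        have := h.sapp_add hm (by omega) (k - p - m)
        rwa [Nat.add_sub_cancel' (by omega), add_right_comm, Nat.add_sub_cancel' (by omega),
          Nat.sub_add_cancel (by omega)] at this
      have hidx : rhoIndex m p (k - p) = rhoIndex m p k := by
        rw [rhoIndex, rhoIndex, if_neg (by omega), if_neg (by omega),
          show k - m = k - p - m + p by omega, Nat.add_mod_right]
      exact hshift.symm.trans (hidx ▸ ih (k - p) (by omega) (by omega))

-- Twelve complete developments reach the normal forms of `B¹, …, B¹⁰`.
def normB (k : ℕ) : Lam := develop^[12] (sapp B k)

theorem normB_six : normB 6 = E := by decide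

theorem normB_ten : normB 10 = E := by decide

theorem isNormal_normB : ∀ k < 10, isNormal (normB k) = true := by decide

theorem normB_injOn :
    ∀ a < 10, ∀ b < 10, 1 ≤ a → 1 ≤ b → normB a = normB b → a = b := by
  decide

theorem eq_of_betaEta_sapp_B {a b : ℕ} (ha : 1 ≤ a) (ha' : a < 10) (hb : 1 ≤ b) (hb' : b < 10)
    (h : BetaEta (sapp B a) (sapp B b)) : a = b := by
  refine normB_injOn a ha' b hb' ha hb ?_
  exact (((betaEta_iterate_develop 12 _).symm.trans h).trans
    (betaEta_iterate_develop 12 _)).eq_of_isNormal (isNormal_normB a ha') (isNormal_normB b hb')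

theorem rho_property_of_B :
    BetaEta (sapp B 6) E ∧
    BetaEta (sapp B 10) E ∧
    (∀ i : Nat, 6 ≤ i → BetaEta (sapp B i) (sapp B (i + 4))) ∧
    (∀ i j : Nat, 1 ≤ i → 1 ≤ j → BetaEta (sapp B i) (sapp B (i + j)) → 6 ≤ i ∧ 4 ≤ j) := by
  have h6 : BetaEta (sapp B 6) E := normB_six ▸ betaEta_iterate_develop 12 (sapp B 6)
  have h10 : BetaEta (sapp B 10) E := normB_ten ▸ betaEta_iterate_develop 12 (sapp B 10)
  have hper : BetaEta (sapp B 6) (sapp B (6 + 4)) := h6.trans h10.symm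
  refine ⟨h6, h10, fun i hi => ?_, fun i j hi hj h => ?_⟩
  · obtain ⟨k, rfl⟩ := Nat.exists_eq_add_of_le hi
    rw [add_right_comm]
    exact hper.sapp_add (by norm_num) (by norm_num) k
  · have hrep : ∀ k, 1 ≤ k → BetaEta (sapp B k) (sapp B (rhoIndex 6 4 k)) :=
      fun k hk => betaEta_sapp_rhoIndex (by norm_num) hper hk
    have heq : rhoIndex 6 4 i = rhoIndex 6 4 (i + j) :=
      eq_of_betaEta_sapp_B (one_le_rhoIndex (by norm_num) hi 4)
        (rhoIndex_lt (by norm_num) 6 i) (one_le_rhoIndex (by norm_num) (by omega) 4)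
        (rhoIndex_lt (by norm_num) 6 (i + j))
        (((hrep i hi).symm.trans h).trans (hrep (i + j) (by omega)))
    obtain ⟨hi6, hdvd⟩ := le_and_dvd_of_rhoIndex_eq hj heq
    exact ⟨hi6, Nat.le_of_dvd hj hdvd⟩

end Lam
end

section
/- For all natural numbers m < n, the equation (B^m B) ∘ (B^n B) = (B^{n+1} B) ∘ (B^m B) is derivable from the equations (B2'): B (x ∘ y) = (B x) ∘ (B y) and (B3'): B ∘ (B x) = (B (B x)) ∘ B, where x ∘ y abbreviates B x y and B^k denotes k-fold application of B. -/
/-- Terms built from the constant B by application. -/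
inductive BTerm : Type
  | B : BTerm
  | app : BTerm → BTerm → BTerm
  deriving DecidableEq

namespace BTerm

/-- Composition: x ∘ y = B x y. -/
def comp (x y : BTerm) : BTerm := app (app B x) y

/-- Monomial B^n B (n-fold application of B to B). -/
def mon : Nat → BTerm
  | 0 => B
  | n + 1 => app B (mon n)

end BTerm

namespace BTerm

/-- Equational theory generated by (B2'), (B3'), and associativity of ∘,
closed under reflexivity, symmetry, transitivity, and congruence. -/
inductive EqC : BTerm → BTerm → Prop
  | B2' (x y : BTerm) : EqC (app B (comp x y)) (comp (app B x) (app B y))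
  | B3' (x : BTerm) : EqC (comp B (app B x)) (comp (app B (app B x)) B)
  | assoc (x y z : BTerm) : EqC (comp x (comp y z)) (comp (comp x y) z)
  | refl (t : BTerm) : EqC t t
  | symm {t s : BTerm} : EqC t s → EqC s t
  | trans {t s u : BTerm} : EqC t s → EqC s u → EqC t u
  | congApp {t t' s s' : BTerm} : EqC t t' → EqC s s' → EqC (app t s) (app t' s')

/-- (B2') distributes `B` over `∘`, so every `∘`-equation lifts under `B`. -/
theorem EqC.comp_app_B {x y z w : BTerm} (h : EqC (comp x y) (comp z w)) :
    EqC (comp (app B x) (app B y)) (comp (app B z) (app B w)) :=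
  (B2' x y).symm.trans ((congApp (refl B) h).trans (B2' z w))

theorem mon_swap (m n : Nat) (h : m < n) :
    EqC (comp (mon m) (mon n)) (comp (mon (n + 1)) (mon m)) := by
  induction m generalizing n with
  | zero =>
    obtain _ | k := n
    · omega
    · exact EqC.B3' (mon k)
  | succ m ih =>
    obtain _ | k := n
    · omega
    · exact (ih k (by omega)).comp_app_B

end BTerm
end

section
/- Every B-term (a term built from the constant B by application) is equal, in the equational theory generated by (B1), (B2), (B3), to a polynomial: a composition (B^{n₁} B) ∘ (B^{n₂} B) ∘ ... ∘ (B^{n_k} B) with k > 0 and n₁,...,n_k ≥ 0, where x ∘ y = B x y. -/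
namespace BTerm

/-- Equational theory generated by (B1), (B2), (B3), closed under
reflexivity, symmetry, transitivity, and congruence. -/
inductive EqB : BTerm → BTerm → Prop
  | B1 (x y z : BTerm) : EqB (app (app (app B x) y) z) (app x (app y z))
  | B2 (x y : BTerm) :
      EqB (app B (app (app B x) y)) (app (app B (app B x)) (app B y))
  | B3 (x : BTerm) :
      EqB (app (app B B) (app B x)) (app (app B (app B (app B x))) B)
  | refl (t : BTerm) : EqB t t
  | symm {t s : BTerm} : EqB t s → EqB s t
  | trans {t s u : BTerm} : EqB t s → EqB s u → EqB t u
  | congApp {t t' s s' : BTerm} : EqB t t' → EqB s s' → EqB (app t s) (app t' s')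

/-- Polynomial (B^n B) ∘ (B^{m₁} B) ∘ ... ∘ (B^{m_k} B) with degrees n :: L. -/
def poly : Nat → List Nat → BTerm
  | n, [] => mon n
  | n, m :: L => comp (mon n) (poly m L)

/-! Induction on the term: polynomials are closed under application. By (B1),
`(B^n B ∘ q) p = B^n B (q p)`, which reduces the general case to a monomial applied to a
polynomial `p`. For `n > 0`, `B^n B p` is already the composition `B^{n-1} B ∘ p`; for `n = 0`,
(B2) distributes `B` over the compositions of `p`, raising every degree by one. -/

def IsPoly (t : BTerm) : Prop := ∃ (n : ℕ) (L : List ℕ), EqB t (poly n L)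

theorem IsPoly.of_eqB {t s : BTerm} (h : EqB t s) (hs : IsPoly s) : IsPoly t :=
  let ⟨n, L, hs⟩ := hs
  ⟨n, L, h.trans hs⟩

theorem isPoly_poly (n : ℕ) (L : List ℕ) : IsPoly (poly n L) := ⟨n, L, EqB.refl _⟩

theorem EqB.app_B_poly : ∀ (m : ℕ) (L : List ℕ),
    EqB (app B (poly m L)) (poly (m + 1) (L.map (· + 1)))
  | m, [] => EqB.refl (mon (m + 1))
  | m, k :: L => (EqB.B2 (mon m) (poly k L)).trans (.congApp (.refl _) (app_B_poly k L))

theorem isPoly_app_mon_poly (n m : ℕ) (M : List ℕ) : IsPoly (app (mon n) (poly m M)) := by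
  cases n with
  | zero => exact IsPoly.of_eqB (EqB.app_B_poly m M) (isPoly_poly _ _)
  | succ n => exact isPoly_poly n (m :: M)

theorem isPoly_app_poly_poly : ∀ (n : ℕ) (L : List ℕ) (m : ℕ) (M : List ℕ),
    IsPoly (app (poly n L) (poly m M))
  | n, [], m, M => isPoly_app_mon_poly n m M
  | n, k :: L, m, M => by
    obtain ⟨n₁, L₁, h₁⟩ := isPoly_app_poly_poly k L m M
    exact IsPoly.of_eqB ((EqB.B1 (mon n) (poly k L) (poly m M)).trans (.congApp (.refl _) h₁))
      (isPoly_app_mon_poly n n₁ L₁)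

theorem IsPoly.app {t s : BTerm} (ht : IsPoly t) (hs : IsPoly s) : IsPoly (app t s) := by
  obtain ⟨n, L, ht⟩ := ht
  obtain ⟨m, M, hs⟩ := hs
  exact (isPoly_app_poly_poly n L m M).of_eqB (.congApp ht hs)

theorem exists_polynomial (e : BTerm) :
    ∃ (n : Nat) (L : List Nat), EqB e (poly n L) := by
  induction e with
  | B => exact isPoly_poly 0 []
  | app t s iht ihs => exact IsPoly.app iht ihs

end BTerm
end

section
/- Every polynomial (B^{n₁} B) ∘ ... ∘ (B^{n_k} B) is equal, in the equational theory generated by (B1)–(B3), to a decreasing polynomial of the same length k whose lowest (last) degree equals the minimum achievable as in the original: formally, there exist m₁ ≥ m₂ ≥ ... ≥ m_k with the polynomial equal to (B^{m₁} B) ∘ ... ∘ (B^{m_k} B), and m_k equals the last degree when repeatedly applying the swap rule (B^m B) ∘ (B^n B) = (B^{n+1} B) ∘ (B^m B) for m < n. -/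
namespace BTerm

infix:50 " ≈ᴮ " => EqB

instance : Trans EqB EqB EqB := ⟨EqB.trans⟩

lemma EqB.comp {x x' y y' : BTerm} (hx : x ≈ᴮ x') (hy : y ≈ᴮ y') : comp x y ≈ᴮ comp x' y' :=
  .congApp (.congApp (.refl B) hx) hy

lemma comp_assoc (x y z : BTerm) : comp (comp x y) z ≈ᴮ comp x (comp y z) :=
  (EqB.congApp (EqB.B2 x y) (.refl z)).trans (EqB.B1 (app B x) (app B y) z)

lemma comp_mon_mon_swap {m n : ℕ} (h : m < n) :
    comp (mon m) (mon n) ≈ᴮ comp (mon (n + 1)) (mon m) := by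
  obtain ⟨k, rfl⟩ : ∃ k, n = k + 1 := ⟨n - 1, by omega⟩
  induction m generalizing k with
  | zero => exact EqB.B3 (mon k)
  | succ m ih =>
    obtain ⟨k, rfl⟩ : ∃ j, k = j + 1 := ⟨k - 1, by omega⟩
    calc comp (mon (m + 1)) (mon (k + 2))
        _ ≈ᴮ app B (comp (mon m) (mon (k + 1))) := (EqB.B2 _ _).symm
        _ ≈ᴮ app B (comp (mon (k + 2)) (mon m)) := .congApp (.refl B) (ih k (by omega))
        _ ≈ᴮ comp (mon (k + 3)) (mon (m + 1)) := EqB.B2 _ _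

lemma poly_swap {n m : ℕ} (h : n < m) (M : List ℕ) :
    poly n (m :: M) ≈ᴮ poly (m + 1) (n :: M) := by
  cases M with
  | nil => exact comp_mon_mon_swap h
  | cons k K =>
    calc poly n (m :: k :: K)
        _ ≈ᴮ comp (comp (mon n) (mon m)) (poly k K) := (comp_assoc _ _ _).symm
        _ ≈ᴮ comp (comp (mon (m + 1)) (mon n)) (poly k K) := .comp (comp_mon_mon_swap h) (.refl _)
        _ ≈ᴮ poly (m + 1) (n :: k :: K) := comp_assoc _ _ _

def insertDeg (n : ℕ) : List ℕ → List ℕ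
  | [] => [n]
  | m :: M => if m ≤ n then n :: m :: M else (m + 1) :: insertDeg n M

section insertDeg

variable (n : ℕ)

lemma length_insertDeg (M : List ℕ) : (insertDeg n M).length = M.length + 1 := by
  induction M with
  | nil => rfl
  | cons m M ih => unfold insertDeg; split_ifs <;> simp [ih]

lemma insertDeg_ne_nil (M : List ℕ) : insertDeg n M ≠ [] :=
  List.ne_nil_of_length_eq_add_one (length_insertDeg n M)

lemma poly_eqB_insertDeg (M : List ℕ) {a : ℕ} {A : List ℕ} (hins : insertDeg n M = a :: A) :
    poly n M ≈ᴮ poly a A := by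
  induction M generalizing a A with
  | nil =>
    obtain ⟨rfl, rfl⟩ := List.cons_eq_cons.mp hins
    exact .refl _
  | cons m M ih =>
    unfold insertDeg at hins
    split_ifs at hins with hmn
    · obtain ⟨rfl, rfl⟩ := List.cons_eq_cons.mp hins
      exact .refl _
    · obtain ⟨rfl, rfl⟩ := List.cons_eq_cons.mp hins
      obtain ⟨b, B, hB⟩ := List.exists_cons_of_ne_nil (insertDeg_ne_nil n M)
      calc poly n (m :: M)
          _ ≈ᴮ poly (m + 1) (n :: M) := poly_swap (by omega) M
          _ ≈ᴮ poly (m + 1) (b :: B) := .comp (.refl _) (ih hB)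
          _ = poly (m + 1) (insertDeg n M) := by rw [hB]

lemma isChain_insertDeg {M : List ℕ} (hM : M.IsChain (· ≥ ·)) :
    (insertDeg n M).IsChain (· ≥ ·) := by
  induction M with
  | nil => simp [insertDeg]
  | cons m M ih =>
    unfold insertDeg
    split_ifs with hmn
    · exact hM.cons_cons hmn
    · refine List.isChain_cons.mpr ⟨?_, ih hM.tail⟩
      cases M with
      | nil => simpa [insertDeg] using (by omega : n ≤ m + 1)
      | cons k K =>
        have hkm : k ≤ m := (List.isChain_cons_cons.mp hM).1
        unfold insertDeg
        split_ifs <;>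
          simp only [List.head?_cons, Option.mem_def, Option.some.injEq, forall_eq'] <;> omega

lemma getLast_insertDeg {M : List ℕ} (hM : M ≠ []) (hchain : M.IsChain (· ≥ ·)) :
    (insertDeg n M).getLast (insertDeg_ne_nil n M) = min n (M.getLast hM) := by
  induction M with
  | nil => contradiction
  | cons m M ih =>
    unfold insertDeg
    split_ifs with hmn
    · have hlast : (m :: M).getLast hM ≤ m :=
        (List.isChain_iff_pairwise.mp hchain).rel_getLast List.mem_cons_self
      rw [List.getLast_cons (List.cons_ne_nil m M)]
      omega
    · rw [List.getLast_cons (insertDeg_ne_nil n M)]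
      cases M with
      | nil => simpa [insertDeg] using (not_le.mp hmn).le
      | cons k K => simp [ih (List.cons_ne_nil k K) hchain.tail]

end insertDeg

lemma min_foldr_min_comm {α : Type*} [LinearOrder α] (a b : α) (L : List α) :
    min a (L.foldr min b) = min b (L.foldr min a) :=
  calc min a (L.foldr min b)
      _ = L.foldr min (min a b) := (List.foldr_hom (min a) fun x y => min_left_comm x a y).symm
      _ = L.foldr min (min b a) := by rw [min_comm]
      _ = min b (L.foldr min a) := List.foldr_hom (min b) fun x y => min_left_comm x b y

theorem exists_decreasing_polynomial (n : Nat) (L : List Nat) :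
    ∃ (m : Nat) (M : List Nat),
      EqB (poly n L) (poly m M) ∧
      M.length = L.length ∧
      List.Chain' (· ≥ ·) (m :: M) ∧
      (m :: M).getLast (List.cons_ne_nil m M) = List.foldr min n L := by
  induction L generalizing n with
  | nil => exact ⟨n, [], .refl _, rfl, .singleton n, rfl⟩
  | cons k L ih =>
    obtain ⟨b, B, hbB, hlen, hchain, hlast⟩ := ih k
    obtain ⟨m, M, hins⟩ := List.exists_cons_of_ne_nil (insertDeg_ne_nil n (b :: B))
    refine ⟨m, M, (EqB.comp (.refl _) hbB).trans (poly_eqB_insertDeg n _ hins), ?_,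
      hins ▸ isChain_insertDeg n hchain, ?_⟩
    · simpa [hins, hlen] using length_insertDeg n (b :: B)
    · have hlast' := getLast_insertDeg n (List.cons_ne_nil b B) hchain
      simp only [hins] at hlast'
      rw [hlast', hlast, min_foldr_min_comm]
      rfl

end BTerm
end

section
/- In the semigroup presented by generators g₀, g₁, g₂, ... (one for each natural number, representing B^n B) with relations gₙ gₘ = g_{m+1} gₙ for all m > n, every element has a unique representative g_{n₁} g_{n₂} ⋯ g_{n_k} with n₁ ≥ n₂ ≥ ... ≥ n_k. -/
/-- The defining relations: gₙ * gₘ = g_{m+1} * gₙ whenever m > n. -/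
def bRel : FreeSemigroup ℕ → FreeSemigroup ℕ → Prop := fun a b =>
  ∃ m n : ℕ, n < m ∧
    a = FreeSemigroup.of n * FreeSemigroup.of m ∧
    b = FreeSemigroup.of (m + 1) * FreeSemigroup.of n

/-- The word g_{n} g_{k₁} ⋯ g_{k_l} in the free semigroup, for the
nonempty index list n :: L. -/
def word (n : ℕ) (L : List ℕ) : FreeSemigroup ℕ :=
  L.foldl (fun a k => a * FreeSemigroup.of k) (FreeSemigroup.of n)

/-!
Rewriting `gₙ gₘ ↦ g_{m+1} gₙ` (for `m > n`) moves a generator `g_k` into a decreasing word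
past every index larger than `k`, raising each of those by one, until it meets an index `≤ k`;
inserting the letters of a word one at a time from the right gives a decreasing representative.
For uniqueness, this insertion is an action of the free semigroup on index lists that respects
the relations (inserting `m` then `n` agrees with inserting `n` then `m + 1`), and it rebuilds
every decreasing word from the empty list.
-/

namespace DecreasingNormalForm

open FreeSemigroup List

def leftMulGen (k : ℕ) : List ℕ → List ℕ
  | [] => [k]
  | a :: t => if k < a then (a + 1) :: leftMulGen k t else k :: a :: t

lemma leftMulGen_cons_of_le {k a : ℕ} (t : List ℕ) (h : a ≤ k) :
    leftMulGen k (a :: t) = k :: a :: t := by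
  simp [leftMulGen, Nat.not_lt.2 h]

lemma leftMulGen_comm (l : List ℕ) {n m : ℕ} (h : n < m) :
    leftMulGen n (leftMulGen m l) = leftMulGen (m + 1) (leftMulGen n l) := by
  induction l with
  | nil => simp [leftMulGen, h, Nat.not_lt.2 (Nat.le_succ_of_le h.le)]
  | cons a t ih =>
    by_cases hma : m < a
    · have hna : n < a + 1 := by omega
      simp [leftMulGen, hma, h.trans hma, hna, ih]
    by_cases hna : n < a
    · simp [leftMulGen, hma, hna, h]
    · simp [leftMulGen, hma, hna, h]
      omega

lemma isChain_succ_cons_leftMulGen {k a : ℕ} {t : List ℕ} (hk : k < a)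
    (ht : IsChain (· ≥ ·) (a :: t)) : IsChain (· ≥ ·) ((a + 1) :: leftMulGen k t) := by
  induction t generalizing a with
  | nil => simpa [leftMulGen] using hk.le.trans a.le_succ
  | cons b t ih =>
    rw [isChain_cons_cons] at ht
    by_cases hkb : k < b
    · simp only [leftMulGen, if_pos hkb, isChain_cons_cons]
      exact ⟨by omega, ih hkb ht.2⟩
    · simp only [leftMulGen, if_neg hkb, isChain_cons_cons]
      exact ⟨by omega, by omega, ht.2⟩

lemma isChain_leftMulGen (k : ℕ) {l : List ℕ} (hl : IsChain (· ≥ ·) l) :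
    IsChain (· ≥ ·) (leftMulGen k l) := by
  cases l with
  | nil => simp [leftMulGen]
  | cons a t =>
    rcases le_or_gt a k with hak | hka
    · rw [leftMulGen_cons_of_le t hak, isChain_cons_cons]
      exact ⟨hak, hl⟩
    · rw [leftMulGen, if_pos hka]
      exact isChain_succ_cons_leftMulGen hka hl

lemma word_eq_mk (a : ℕ) (t : List ℕ) : word a t = ⟨a, t⟩ :=
  DFunLike.congr_fun (lift_comp_of' (MulHom.id _)) ⟨a, t⟩

lemma word_cons (a b : ℕ) (t : List ℕ) : word a (b :: t) = of a * word b t := by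
  rw [word_eq_mk, word_eq_mk]
  rfl

lemma coe_of_mul_of_of_lt {n m : ℕ} (h : n < m) :
    ((of n * of m : FreeSemigroup ℕ) : (conGen bRel).Quotient) = ↑(of (m + 1) * of n) :=
  (Con.eq _).2 (ConGen.Rel.of _ _ ⟨m, n, h, rfl, rfl⟩)

lemma exists_leftMulGen_eq_cons (k a : ℕ) (t : List ℕ) :
    ∃ b u, leftMulGen k (a :: t) = b :: u ∧
      ((of k * word a t : FreeSemigroup ℕ) : (conGen bRel).Quotient) = word b u := by
  rcases le_or_gt a k with hak | hka
  · exact ⟨k, a :: t, leftMulGen_cons_of_le t hak, by rw [word_cons]⟩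
  induction t generalizing a with
  | nil => exact ⟨a + 1, [k], by simp [leftMulGen, hka], coe_of_mul_of_of_lt hka⟩
  | cons c t ih =>
    obtain ⟨b, u, hbu, hQ⟩ : ∃ b u, leftMulGen k (c :: t) = b :: u ∧
        ((of k * word c t : FreeSemigroup ℕ) : (conGen bRel).Quotient) = word b u := by
      rcases le_or_gt c k with hck | hkc
      · exact ⟨k, c :: t, leftMulGen_cons_of_le t hck, by rw [word_cons]⟩
      · exact ih c hkc
    refine ⟨a + 1, b :: u, by rw [leftMulGen, if_pos hka, hbu], ?_⟩
    calc ((of k * word a (c :: t) : FreeSemigroup ℕ) : (conGen bRel).Quotient)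
        = ↑(of k * of a) * ↑(word c t) := by rw [word_cons, ← mul_assoc, Con.coe_mul]
      _ = ↑(of (a + 1) * of k) * ↑(word c t) := by rw [coe_of_mul_of_of_lt hka]
      _ = ↑(of (a + 1)) * ↑(of k * word c t) := by rw [Con.coe_mul, Con.coe_mul, mul_assoc]
      _ = ↑(word (a + 1) (b :: u)) := by rw [hQ, word_cons, Con.coe_mul]

lemma exists_isChain_coe_eq_word (w : FreeSemigroup ℕ) :
    ∃ p : ℕ × List ℕ, IsChain (· ≥ ·) (p.1 :: p.2) ∧
      (w : (conGen bRel).Quotient) = word p.1 p.2 := by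
  induction w using FreeSemigroup.recOnMul with
  | ih1 x => exact ⟨(x, []), isChain_singleton x, rfl⟩
  | ih2 x y _ ih =>
    obtain ⟨⟨a, t⟩, hc, hy⟩ := ih
    obtain ⟨b, u, he, hQ⟩ := exists_leftMulGen_eq_cons x a t
    refine ⟨(b, u), he ▸ isChain_leftMulGen x hc, ?_⟩
    rw [Con.coe_mul, hy, ← Con.coe_mul, hQ]

def nfAction : FreeSemigroup ℕ →ₙ* Function.End (List ℕ) := lift leftMulGen

lemma nfAction_eq_of_conGen {x y : FreeSemigroup ℕ} (h : conGen bRel x y) :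
    nfAction x = nfAction y := by
  refine (Con.ker_rel nfAction).1 (Con.conGen_le.2 ?_ h)
  rintro _ _ ⟨m, n, hnm, rfl, rfl⟩
  refine (Con.ker_rel nfAction).2 ?_
  simp only [map_mul, nfAction]
  funext l
  exact leftMulGen_comm l hnm

lemma nfAction_word_nil {a : ℕ} {t : List ℕ} (h : IsChain (· ≥ ·) (a :: t)) :
    nfAction (word a t) [] = a :: t := by
  induction t generalizing a with
  | nil => rfl
  | cons b t ih =>
    rw [isChain_cons_cons] at h
    rw [word_cons, map_mul]
    show leftMulGen a (nfAction (word b t) []) = _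
    rw [ih h.2, leftMulGen_cons_of_le t h.1]

lemma eq_of_isChain_of_coe_word_eq {p q : ℕ × List ℕ} (hp : IsChain (· ≥ ·) (p.1 :: p.2))
    (hq : IsChain (· ≥ ·) (q.1 :: q.2))
    (h : (word p.1 p.2 : (conGen bRel).Quotient) = word q.1 q.2) : p = q := by
  have hnf := congrFun (nfAction_eq_of_conGen ((Con.eq _).1 h)) []
  rw [nfAction_word_nil hp, nfAction_word_nil hq, cons.injEq] at hnf
  exact Prod.ext hnf.1 hnf.2

end DecreasingNormalForm

open DecreasingNormalForm

/-- In the semigroup presented by the generators gₙ and the relations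
gₙ gₘ = g_{m+1} gₙ (for m > n), every element has a unique weakly-decreasing
representative word. -/
theorem unique_decreasing_representative (x : (conGen bRel).Quotient) :
    ∃! p : ℕ × List ℕ,
      List.Chain' (· ≥ ·) (p.1 :: p.2) ∧ x = ↑(word p.1 p.2) := by
  refine Con.induction_on x fun w => ?_
  obtain ⟨p, hp, hw⟩ := exists_isChain_coe_eq_word w
  exact ⟨p, ⟨hp, hw⟩, fun q ⟨hq, hqw⟩ => eq_of_isChain_of_coe_word_eq hq hp (hqw.symm.trans hw)⟩
end

section
/- Define the application operation ⊛ on finite weakly-decreasing lists of natural numbers (canonical representations of B-terms) by: L₁ ⊛ L₂ = decrement-each-element (strip-trailing-zeros (sort-by-swap (L₁ ++ map (+1) L₂))), where sort-by-swap repeatedly replaces adjacent [n, m] with [m+1, n] when n < m until the list is weakly decreasing. Then for the list [0,0] (representing B∘B = B²), the iteration L_{i+1} = L_i ⊛ [0,0] starting from L₁ = [0,0] satisfies: for every m ≥ 1 and 0 ≤ j ≤ m, L_{m(m+1)/2 + j} equals the concatenation of the pairs (2m−i−j+2, 2m−i−j+2) for i = 1..j followed by the pairs (m−i, m−i) for i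 = j+1..m (each degree appearing twice consecutively). -/
/-!
Swap normalization is insertion sort with `bumpInsert`: two insertions `n < m` commute exactly
as the swap rule `[n, m] → [m + 1, n]` prescribes, so `foldr bumpInsert` is invariant under
swap steps and fixes weakly decreasing lists; hence `Apply L₁ L₂ L` forces
`L = applyNF L₁ L₂`.

With `k = m - j`, the list at index `m(m+1)/2 + j` is `pairBlock (2k+2) j ++ pairBlock 0 k`.
Appending `[1, 1]` and sorting, the new pair climbs past the `k` lower pairs and arrives as
`2k+1, 2k+1`; stripping the two zeros and decrementing gives the same shape with `(j+1, k-1)`.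
When `k = 0` nothing is stripped and the result is the shape `(0, j+1)` that starts the next
round, at index `(m+1)(m+2)/2`.
-/

/-- One application of the swap rewriting rule on degree lists:
[..., n, m, ...] → [..., m+1, n, ...] when n < m. -/
inductive SwapStep : List ℕ → List ℕ → Prop
  | swap (l₁ l₂ : List ℕ) {n m : ℕ} (h : n < m) :
      SwapStep (l₁ ++ n :: m :: l₂) (l₁ ++ (m + 1) :: n :: l₂)

/-- Remove trailing zeros from a list. -/
def stripZeros (L : List ℕ) : List ℕ := (L.reverse.dropWhile (· == 0)).reverse

/-- `Apply L₁ L₂ L` holds when `L` is the canonical (weakly decreasing) list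
representing the application of the B-term represented by `L₁` to that
represented by `L₂`:  append `L₁` with each element of `L₂` raised by one,
normalize with the swap rule until weakly decreasing, strip trailing zeros,
and decrement each element. -/

def Apply (L₁ L₂ L : List ℕ) : Prop :=
  ∃ M : List ℕ,
    Relation.ReflTransGen SwapStep (L₁ ++ L₂.map (· + 1)) M ∧
    List.Chain' (· ≥ ·) M ∧
    L = (stripZeros M).map (· - 1)

/-- The canonical list of (B²)ₗ^{m(m+1)/2 + j}: degrees 2m−i−j+2 for i = 1..j,
then m−i for i = j+1..m, each repeated twice. -/
def target (m j : ℕ) : List ℕ :=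
  ((List.range j).map fun i => 2 * m - (i + 1) - j + 2).flatMap (fun d => [d, d]) ++
    ((List.range (m - j)).map fun i => m - (j + 1 + i)).flatMap (fun d => [d, d])

/-- For weakly decreasing `L`, the swap-normal form of `n :: L`: `n` travels right past every
larger entry, raising it by one. -/
def bumpInsert (n : ℕ) : List ℕ → List ℕ
  | [] => [n]
  | m :: M => if m ≤ n then n :: m :: M else (m + 1) :: bumpInsert n M

def swapNF (L : List ℕ) : List ℕ := L.foldr bumpInsert []

theorem bumpInsert_cons_of_lt {n m : ℕ} (h : n < m) (M : List ℕ) :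
    bumpInsert n (m :: M) = (m + 1) :: bumpInsert n M := by
  simp [bumpInsert, Nat.not_le.mpr h]

theorem bumpInsert_pair_of_lt {n c : ℕ} (h : n < c) (L : List ℕ) :
    bumpInsert n (c :: c :: L) = (c + 1) :: (c + 1) :: bumpInsert n L := by
  rw [bumpInsert_cons_of_lt h, bumpInsert_cons_of_lt h]

theorem bumpInsert_of_forall_le {n : ℕ} {M : List ℕ} (h : ∀ m ∈ M, m ≤ n) :
    bumpInsert n M = n :: M := by
  cases M with
  | nil => rfl
  | cons m M => simp [bumpInsert, h m (by simp)]

theorem bumpInsert_bumpInsert_of_lt {n m : ℕ} (h : n < m) :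
    ∀ K, bumpInsert n (bumpInsert m K) = bumpInsert (m + 1) (bumpInsert n K)
  | [] => by simp [bumpInsert, Nat.not_le.mpr h, h.le.trans (Nat.le_succ m)]
  | k :: K => by
    by_cases hkm : k ≤ m
    · by_cases hkn : k ≤ n
      · simp [bumpInsert, hkm, hkn, Nat.not_le.mpr h, h.le.trans (Nat.le_succ m)]
      · simp [bumpInsert, hkm, hkn, Nat.not_le.mpr h]
    · simp [bumpInsert, hkm, show ¬ k ≤ n by omega, show ¬ k + 1 ≤ n by omega,
        bumpInsert_bumpInsert_of_lt h K]

theorem SwapStep.swapNF_eq {L L' : List ℕ} (h : SwapStep L L') : swapNF L = swapNF L' := by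
  obtain ⟨l₁, l₂, h⟩ := h
  simp only [swapNF, List.foldr_append, List.foldr_cons, bumpInsert_bumpInsert_of_lt h]

theorem swapNF_eq_of_reflTransGen {L M : List ℕ} (h : Relation.ReflTransGen SwapStep L M) :
    swapNF L = swapNF M := by
  induction h with
  | refl => rfl
  | tail _ hstep ih => exact ih.trans hstep.swapNF_eq

theorem foldr_bumpInsert_of_pairwise :
    ∀ {L C : List ℕ}, (L ++ C).Pairwise (· ≥ ·) → L.foldr bumpInsert C = L ++ C
  | [], _, _ => rfl
  | x :: L, C, h => by
    rw [List.cons_append, List.pairwise_cons] at h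
    rw [List.foldr_cons, foldr_bumpInsert_of_pairwise h.2, bumpInsert_of_forall_le h.1,
      List.cons_append]

theorem swapNF_of_pairwise {M : List ℕ} (h : M.Pairwise (· ≥ ·)) : swapNF M = M :=
  (foldr_bumpInsert_of_pairwise (by rwa [List.append_nil])).trans (List.append_nil M)

def applyNF (L₁ L₂ : List ℕ) : List ℕ :=
  (stripZeros (swapNF (L₁ ++ L₂.map (· + 1)))).map (· - 1)

theorem Apply.eq_applyNF {L₁ L₂ L : List ℕ} (h : Apply L₁ L₂ L) : L = applyNF L₁ L₂ := by
  obtain ⟨M, hM, hsorted, rfl⟩ := h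
  rw [applyNF, swapNF_eq_of_reflTransGen hM,
    swapNF_of_pairwise (List.isChain_iff_pairwise.mp hsorted)]

theorem stripZeros_append_of_forall_eq_zero {L Z : List ℕ} (hZ : ∀ x ∈ Z, x = 0) :
    stripZeros (L ++ Z) = stripZeros L := by
  have : Z.reverse.dropWhile (· == 0) = [] := List.dropWhile_eq_nil_iff.mpr (by simpa using hZ)
  simp [stripZeros, List.dropWhile_append, this]

theorem stripZeros_of_forall_ne_zero {L : List ℕ} (hL : ∀ x ∈ L, x ≠ 0) : stripZeros L = L := by
  rw [stripZeros, List.reverse_eq_iff, List.dropWhile_eq_self_iff]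
  intro h
  simpa using hL _ (List.mem_reverse.mp (List.getElem_mem h))

def pairBlock (c : ℕ) : ℕ → List ℕ
  | 0 => []
  | k + 1 => (c + k) :: (c + k) :: pairBlock c k

@[simp]
theorem mem_pairBlock {c k x : ℕ} : x ∈ pairBlock c k ↔ c ≤ x ∧ x < c + k := by
  induction k with
  | zero => simp [pairBlock]
  | succ k ih => simp [pairBlock, ih]; omega

theorem pairwise_pairBlock (c k : ℕ) : (pairBlock c k).Pairwise (· ≥ ·) := by
  induction k with
  | zero => simp [pairBlock]
  | succ k ih => simp [pairBlock, ih]; omega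

theorem pairBlock_succ (c k : ℕ) : pairBlock c (k + 1) = pairBlock (c + 1) k ++ [c, c] := by
  induction k with
  | zero => simp [pairBlock]
  | succ k ih => rw [pairBlock, ih, pairBlock, show c + (k + 1) = c + 1 + k by omega]; rfl

theorem map_pred_pairBlock (c k : ℕ) : (pairBlock (c + 1) k).map (· - 1) = pairBlock c k := by
  induction k with
  | zero => rfl
  | succ k ih => simp [pairBlock, ih]

theorem foldr_bumpInsert_pairBlock_zero (k : ℕ) :
    (pairBlock 0 k).foldr bumpInsert [1, 1] = (2 * k + 1) :: (2 * k + 1) :: pairBlock 0 k := by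
  induction k with
  | zero => rfl
  | succ k ih =>
    have hk : bumpInsert k (pairBlock 0 k) = k :: pairBlock 0 k :=
      bumpInsert_of_forall_le fun x hx => by simp at hx; omega
    simp only [pairBlock, Nat.zero_add, List.foldr_cons, ih]
    rw [bumpInsert_pair_of_lt (by omega), hk, bumpInsert_pair_of_lt (by omega),
      bumpInsert_of_forall_le (by simp; omega)]
    rfl

def b2List (j k : ℕ) : List ℕ := pairBlock (2 * k + 2) j ++ pairBlock 0 k

theorem swapNF_b2List_append (j k : ℕ) :
    swapNF (b2List j k ++ [1, 1]) =
      pairBlock (2 * k + 2) j ++ (2 * k + 1) :: (2 * k + 1) :: pairBlock 0 k := by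
  rw [b2List, List.append_assoc, swapNF, List.foldr_append, List.foldr_append,
    show [1, 1].foldr bumpInsert [] = [1, 1] from rfl, foldr_bumpInsert_pairBlock_zero]
  apply foldr_bumpInsert_of_pairwise
  simp [List.pairwise_append, pairwise_pairBlock]
  exact ⟨fun a _ => by omega, fun a _ _ => ⟨by omega, fun b _ => by omega⟩⟩

theorem applyNF_b2List_succ (j k : ℕ) : applyNF (b2List j (k + 1)) [0, 0] = b2List (j + 1) k := by
  set S := pairBlock (2 * k + 3 + 1) j ++ (2 * k + 3) :: (2 * k + 3) :: pairBlock (0 + 1) k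
  have hsorted : swapNF (b2List j (k + 1) ++ [1, 1]) = S ++ [0, 0] := by
    rw [swapNF_b2List_append, pairBlock_succ 0 k]
    simp only [S, List.append_assoc, List.cons_append]
    rfl
  have hS : ∀ x ∈ S, x ≠ 0 := by
    simp [S]
    omega
  rw [applyNF, show [0, 0].map (· + 1) = [1, 1] from rfl, hsorted,
    stripZeros_append_of_forall_eq_zero (by simp), stripZeros_of_forall_ne_zero hS]
  simp [S, map_pred_pairBlock, b2List, pairBlock_succ (2 * k + 2) j]

theorem applyNF_b2List_zero (j : ℕ) : applyNF (b2List j 0) [0, 0] = b2List 0 (j + 1) := by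
  set S := pairBlock (1 + 1) j ++ [0 + 1, 0 + 1]
  have hsorted : swapNF (b2List j 0 ++ [1, 1]) = S := by
    simp [swapNF_b2List_append, S, pairBlock]
  have hS : ∀ x ∈ S, x ≠ 0 := by
    simp [S]
    omega
  rw [applyNF, show [0, 0].map (· + 1) = [1, 1] from rfl, hsorted, stripZeros_of_forall_ne_zero hS]
  simp only [S, List.map_append, map_pred_pairBlock, b2List, pairBlock_succ 0 j]
  simp [pairBlock]

theorem pairBlock_eq_flatMap {a j : ℕ} (h : j ≤ a + 1) :
    pairBlock (a + 1 - j) j = ((List.range j).map (a - ·)).flatMap fun d => [d, d] := by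
  induction j with
  | zero => rfl
  | succ j ih =>
    rw [List.range_succ, List.map_append, List.flatMap_append, ← ih (by omega),
      show a + 1 - (j + 1) = a - j by omega, pairBlock_succ, show a - j + 1 = a + 1 - j by omega]
    simp

theorem target_eq_b2List {m j : ℕ} (h : j ≤ m) : target m j = b2List j (m - j) := by
  have hupper : (List.range j).map (fun i => 2 * m - (i + 1) - j + 2) =
      (List.range j).map (2 * m + 1 - j - ·) :=
    List.map_congr_left fun i hi => by rw [List.mem_range] at hi; omega
  have hlower : (List.range (m - j)).map (fun i => m - (j + 1 + i)) =
      (List.range (m - j)).map (m - j - 1 - ·) :=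
    List.map_congr_left fun i hi => by rw [List.mem_range] at hi; omega
  rw [target, b2List, hupper, hlower, ← pairBlock_eq_flatMap (by omega),
    show 2 * m + 1 - j + 1 - j = 2 * (m - j) + 2 by omega]
  rcases Nat.eq_zero_or_pos (m - j) with h0 | hpos
  · simp [h0, pairBlock]
  · rw [← pairBlock_eq_flatMap (by omega), show m - j - 1 + 1 - (m - j) = 0 by omega]

theorem eq_b2List_of_apply {f : ℕ → List ℕ} (hstep : ∀ i, 1 ≤ i → Apply (f i) [0, 0] (f (i + 1)))
    {i : ℕ} (hi : 1 ≤ i) : ∀ {j k : ℕ}, f i = b2List 0 (j + k) → f (i + j) = b2List j k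
  | 0, k, h => by simpa using h
  | j + 1, k, h => by
    have hj : f (i + j) = b2List j (k + 1) :=
      eq_b2List_of_apply hstep hi (by rwa [show j + (k + 1) = j + 1 + k by omega])
    rw [← add_assoc, (hstep _ (by omega)).eq_applyNF, hj, applyNF_b2List_succ]

theorem b2_iteration_canonical (f : ℕ → List ℕ)
    (h1 : f 1 = [0, 0])
    (hstep : ∀ i : ℕ, 1 ≤ i → Apply (f i) [0, 0] (f (i + 1))) :
    ∀ m j : ℕ, 1 ≤ m → j ≤ m → f (m * (m + 1) / 2 + j) = target m j := by
  have htri_pos : ∀ m, 1 ≤ m → 1 ≤ m * (m + 1) / 2 := fun m hm =>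
    (Nat.le_div_iff_mul_le two_pos).mpr (Nat.mul_le_mul hm (Nat.succ_le_succ hm))
  have hround : ∀ m, 1 ≤ m → f (m * (m + 1) / 2) = b2List 0 m := by
    intro m hm
    induction m, hm using Nat.le_induction with
    | base => rw [h1]; rfl
    | succ m hm ih =>
      have htri : (m + 1) * (m + 1 + 1) / 2 = m * (m + 1) / 2 + m + 1 := by
        rw [show (m + 1) * (m + 1 + 1) = m * (m + 1) + (m + 1) * 2 by ring,
          Nat.add_mul_div_right _ _ two_pos, add_assoc]
      have hlast := eq_b2List_of_apply hstep (htri_pos m hm) (j := m) (k := 0) (by simpa using ih)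
      rw [htri, (hstep _ (by omega)).eq_applyNF, hlast, applyNF_b2List_zero]
  intro m j hm hj
  rw [target_eq_b2List hj]
  exact eq_b2List_of_apply hstep (htri_pos m hm) (by rw [hround m hm, Nat.add_sub_cancel' hj])
end

section
/- Let l(X) denote the number of leaves and a(X) the number of right subtrees hanging off the leftmost spine (arity) of the binary tree corresponding to the βη-normal form of a B-term X'. Then for B-terms X', X: l(X' X) = l(X') − 1 + max(l(X) − a(X'), 0). -/
/-!
Each argument `tᵢ` on the spine of `X'` ends up in `X' X` once: either substituted for a leaf
of `X`, which trades that leaf for the `l(tᵢ)` leaves of `tᵢ`, or appended on the right. The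
arguments together have `l(X') - 1` leaves, and exactly `min (l X) (a X')` leaves of `X` are
consumed, so `l(X' X) + min (l X) (a X') = l X + l X' - 1`, which is the claim.
-/

/-- Unlabeled binary trees (βη-normal forms of B-terms). -/
inductive BTree : Type
  | leaf : BTree
  | node : BTree → BTree → BTree
  deriving DecidableEq

namespace BTree

/-- l(t): the number of leaves. -/
def leaves : BTree → ℕ
  | leaf => 1
  | node a b => leaves a + leaves b

/-- The right subtrees hanging off the leftmost spine, in order:
⟨★, t₁, ..., t_k⟩ ↦ [t₁, ..., t_k]. -/
def spine : BTree → List BTree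
  | leaf => []
  | node a b => spine a ++ [b]

/-- a(t): the arity, i.e. the number of arguments along the leftmost spine. -/
def arity (t : BTree) : ℕ := (spine t).length

/-- Substitute the given trees for the leaves of `t`, left to right,
returning the resulting tree together with the unused trees. -/
def substLeaves : BTree → List BTree → BTree × List BTree
  | leaf, [] => (leaf, [])
  | leaf, s :: rest => (s, rest)
  | node a b, ss =>
      let p := substLeaves a ss
      let q := substLeaves b p.2
      (node p.1 q.1, q.2)

/-- Application of B-terms on normal-form trees: if X' = ⟨★, t₁, ..., t_k⟩,
substitute t₁, ..., t_k for the leaves (lambda variables) of X in order, and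
apply any leftover arguments on the right. -/
def treeApp (t' t : BTree) : BTree :=
  let p := substLeaves t (spine t')
  p.2.foldl node p.1

theorem substLeaves_snd (t : BTree) (ss : List BTree) :
    (substLeaves t ss).2 = ss.drop (leaves t) := by
  induction t generalizing ss with
  | leaf => cases ss <;> simp [substLeaves, leaves]
  | node a b iha ihb => simp [substLeaves, leaves, iha, ihb, List.drop_drop]

theorem leaves_substLeaves_fst_add_min (t : BTree) (ss : List BTree) :
    leaves (substLeaves t ss).1 + min (leaves t) ss.length =
      leaves t + ((ss.take (leaves t)).map leaves).sum := by
  induction t generalizing ss with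
  | leaf => cases ss <;> simp [substLeaves, leaves]; omega
  | node a b iha ihb =>
    have ha := iha ss
    have hb := ihb (substLeaves a ss).2
    rw [substLeaves_snd, List.length_drop] at hb
    simp only [substLeaves, leaves, substLeaves_snd, List.take_add, List.map_append,
      List.sum_append]
    omega

theorem leaves_foldl_node (r : BTree) (l : List BTree) :
    leaves (l.foldl node r) = leaves r + (l.map leaves).sum := by
  induction l generalizing r with
  | nil => simp
  | cons x xs ih => simp only [List.foldl_cons, ih, leaves, List.map_cons, List.sum_cons]; ring

theorem sum_leaves_spine_add_one (t : BTree) : ((spine t).map leaves).sum + 1 = leaves t := by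
  induction t with
  | leaf => simp [spine, leaves]
  | node a b iha _ => simp [spine, leaves]; omega

theorem leaves_treeApp_add_min (t' t : BTree) :
    leaves (treeApp t' t) + min (leaves t) (arity t') + 1 = leaves t + leaves t' := by
  have hsubst := leaves_substLeaves_fst_add_min t (spine t')
  have hsplit : (((spine t').take (leaves t)).map leaves).sum +
      (((spine t').drop (leaves t)).map leaves).sum = ((spine t').map leaves).sum := by
    rw [← List.sum_append, ← List.map_append, List.take_append_drop]
  have hspine := sum_leaves_spine_add_one t'
  rw [treeApp, leaves_foldl_node, substLeaves_snd, arity]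
  omega

theorem leaves_treeApp (t' t : BTree) :
    (leaves (treeApp t' t) : ℤ) =
      (leaves t' : ℤ) - 1 + max ((leaves t : ℤ) - (arity t' : ℤ)) 0 := by
  have h := leaves_treeApp_add_min t' t
  zify at h
  omega

end BTree
end
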